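/- If Φ, Ψ ∈ S_p* for some p ≥ 0, then their convolution Φ∗Ψ, defined by (Φ∗Ψ)^(σ) = Φ̂(σ)·Ψ̂(σ), belongs to S_{2p}*, with ‖Φ∗Ψ‖_{-2p}² ≤ ‖Φ‖_{-p}² ‖Ψ‖_{-p}². -/

import Mathlib

/-! The weight `λ_σ^{-4p}` of `S_{2p}*` is the square of the weight `λ_σ^{-2p}` of `S_p*`, so each
term of `‖Φ∗Ψ‖_{-2p}²` is the product of the corresponding terms of `‖Φ‖_{-p}²` and `‖Ψ‖_{-p}²`.
For nonnegative summable sequences `∑ fᵢ gᵢ ≤ ∑ fᵢ (∑ g) = (∑ f)(∑ g)`, since `gᵢ ≤ ∑ g`. -/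

open scoped BigOperators

/-- `lam σ = ∏_{k∈σ} (1+k)`. -/
noncomputable def lam (σ : Finset ℕ) : ℝ := ∏ k ∈ σ, (1 + k : ℝ)

section PointwiseProduct

variable {ι : Type*} {f g : ι → ℝ}

theorem mul_le_mul_tsum_of_nonneg (hg : Summable g) (hf₀ : 0 ≤ f) (hg₀ : 0 ≤ g) (i : ι) :
    f i * g i ≤ f i * ∑' j, g j :=
  mul_le_mul_of_nonneg_left (hg.le_tsum i fun j _ => hg₀ j) (hf₀ i)

theorem Summable.mul_apply_of_nonneg (hf : Summable f) (hg : Summable g)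
    (hf₀ : 0 ≤ f) (hg₀ : 0 ≤ g) : Summable (fun i => f i * g i) :=
  (hf.mul_right _).of_nonneg_of_le (fun i => mul_nonneg (hf₀ i) (hg₀ i))
    (mul_le_mul_tsum_of_nonneg hg hf₀ hg₀)

theorem tsum_mul_apply_le_tsum_mul_tsum (hf : Summable f) (hg : Summable g)
    (hf₀ : 0 ≤ f) (hg₀ : 0 ≤ g) : ∑' i, f i * g i ≤ (∑' i, f i) * ∑' i, g i :=
  calc ∑' i, f i * g i ≤ ∑' i, f i * ∑' j, g j :=
        (hf.mul_apply_of_nonneg hg hf₀ hg₀).tsum_le_tsum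
          (mul_le_mul_tsum_of_nonneg hg hf₀ hg₀) (hf.mul_right _)
    _ = (∑' i, f i) * ∑' j, g j := tsum_mul_right

end PointwiseProduct

theorem lam_pos (σ : Finset ℕ) : 0 < lam σ :=
  Finset.prod_pos fun k _ => by positivity

theorem rpow_neg_two_mul_two_mul_mul_norm_mul_sq {𝕜 : Type*} [NormedDivisionRing 𝕜]
    {x : ℝ} (hx : 0 < x) (p : ℝ) (u v : 𝕜) :
    x ^ (-(2 * (2 * p))) * ‖u * v‖ ^ 2 =
      (x ^ (-(2 * p)) * ‖u‖ ^ 2) * (x ^ (-(2 * p)) * ‖v‖ ^ 2) := by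
  have hweight : x ^ (-(2 * (2 * p))) = x ^ (-(2 * p)) * x ^ (-(2 * p)) := by
    rw [← Real.rpow_add hx]; ring_nf
  rw [hweight, norm_mul, mul_pow]; ring

theorem stmt18_general (p : ℝ) (a b : Finset ℕ → ℂ)
    (ha : Summable (fun σ : Finset ℕ => lam σ ^ (-(2 * p)) * ‖a σ‖ ^ 2))
    (hb : Summable (fun σ : Finset ℕ => lam σ ^ (-(2 * p)) * ‖b σ‖ ^ 2)) :
    Summable (fun σ : Finset ℕ => lam σ ^ (-(2 * (2 * p))) * ‖a σ * b σ‖ ^ 2) ∧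
    (∑' σ : Finset ℕ, lam σ ^ (-(2 * (2 * p))) * ‖a σ * b σ‖ ^ 2) ≤
      (∑' σ : Finset ℕ, lam σ ^ (-(2 * p)) * ‖a σ‖ ^ 2) *
        (∑' σ : Finset ℕ, lam σ ^ (-(2 * p)) * ‖b σ‖ ^ 2) := by
  have hterm : (fun σ => lam σ ^ (-(2 * (2 * p))) * ‖a σ * b σ‖ ^ 2) = fun σ =>
      (lam σ ^ (-(2 * p)) * ‖a σ‖ ^ 2) * (lam σ ^ (-(2 * p)) * ‖b σ‖ ^ 2) :=
    funext fun σ => rpow_neg_two_mul_two_mul_mul_norm_mul_sq (lam_pos σ) p (a σ) (b σ)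
  have ha₀ : 0 ≤ fun σ => lam σ ^ (-(2 * p)) * ‖a σ‖ ^ 2 := fun σ => by
    have := (lam_pos σ).le; positivity
  have hb₀ : 0 ≤ fun σ => lam σ ^ (-(2 * p)) * ‖b σ‖ ^ 2 := fun σ => by
    have := (lam_pos σ).le; positivity
  rw [hterm]
  exact ⟨ha.mul_apply_of_nonneg hb ha₀ hb₀, tsum_mul_apply_le_tsum_mul_tsum ha hb ha₀ hb₀⟩

/-- **The convolution maps `S_p* × S_p*` to `S_{2p}*.`** Represent `Φ, Ψ ∈ S_p*` by
their Fock transforms `a = Φ̂`, `b = Ψ̂`, so that `‖Φ‖_{-p}² = ∑_σ λ_σ^{-2p}|a σ|² < ∞`.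
The convolution has Fock transform `(Φ∗Ψ)^(σ) = a(σ)·b(σ)`. Then `Φ∗Ψ ∈ S_{2p}*` with
`‖Φ∗Ψ‖_{-2p}² ≤ ‖Φ‖_{-p}² ‖Ψ‖_{-p}²`. -/
theorem stmt18 (p : ℝ) (hp : 0 ≤ p) (a b : Finset ℕ → ℂ)
    (ha : Summable (fun σ : Finset ℕ => lam σ ^ (-(2 * p)) * ‖a σ‖ ^ 2))
    (hb : Summable (fun σ : Finset ℕ => lam σ ^ (-(2 * p)) * ‖b σ‖ ^ 2)) :
    Summable (fun σ : Finset ℕ => lam σ ^ (-(2 * (2 * p))) * ‖a σ * b σ‖ ^ 2) ∧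
    (∑' σ : Finset ℕ, lam σ ^ (-(2 * (2 * p))) * ‖a σ * b σ‖ ^ 2) ≤
      (∑' σ : Finset ℕ, lam σ ^ (-(2 * p)) * ‖a σ‖ ^ 2) *
        (∑' σ : Finset ℕ, lam σ ^ (-(2 * p)) * ‖b σ‖ ^ 2) :=
  stmt18_general p a b ha hb
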